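/- Let u : L² → S³ ⊂ ℝ⁴ be an immersed surface and f(p, t, y) = (t·u(p), y) : L² × ℝ⁺ × ℝ^{n−3} → ℝ^{n+1} the cone over u (n ≥ 4). Then the principal curvatures of f are k₁/t, k₂/t, 0, …, 0, and the Möbius metric of f equals g = [4H_u² − (2n/(n−1))(K_u − 1)]·(I_u + I_{H^{n−2}}), where I_{H^{n−2}} is the hyperbolic metric (dt² + Σ dy_i²)/t² on ℝ⁺ × ℝ^{n−3}. -/

import Mathlib

/-!
The shape operator of the cone is `t⁻¹ S_u ⊕ 0`, so its characteristic polynomial factors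
blockwise. Its squared norm is `t⁻² tr(S_u²) = t⁻² ((k₁ + k₂)² − 2 k₁k₂)`, so `ρ²` is
`t⁻²` times a function of `H_u` and `K_u` alone; multiplying `t² I_u + I_{ℝ^{n−2}}` by `t⁻²`
turns the flat factor into the hyperbolic metric.
-/

open Matrix Polynomial BigOperators

namespace Matrix

theorem trace_fromBlocks {R l m : Type*} [Fintype l] [Fintype m] [AddCommMonoid R]
    (A : Matrix l l R) (B : Matrix l m R) (C : Matrix m l R) (D : Matrix m m R) :
    (fromBlocks A B C D).trace = A.trace + D.trace := by
  simp [trace, Fintype.sum_sum_type]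

theorem charpoly_fin_two_eq_mul {R : Type*} [CommRing R] [Nontrivial R]
    (A : Matrix (Fin 2) (Fin 2) R) {a b : R} (htr : A.trace = a + b) (hdet : A.det = a * b) :
    A.charpoly = (X - C a) * (X - C b) := by
  rw [charpoly_fin_two, htr, hdet, C_add, C_mul]
  ring

theorem trace_mul_self_fin_two {R : Type*} [CommRing R] (A : Matrix (Fin 2) (Fin 2) R) :
    (A * A).trace = A.trace ^ 2 - 2 * A.det := by
  simp only [trace_fin_two, det_fin_two, mul_apply, Fin.sum_univ_two]
  ring

end Matrix

section Cone

variable {K : Type*} [Field K]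

theorem charpoly_cone_shapeOperator {m : Type*} [Fintype m] [DecidableEq m]
    (S : Matrix (Fin 2) (Fin 2) K) {a b : K} (htr : S.trace = a + b) (hdet : S.det = a * b)
    (t : K) :
    (fromBlocks (t⁻¹ • S) 0 0 (0 : Matrix m m K)).charpoly =
      (X - C (a / t)) * (X - C (b / t)) * X ^ Fintype.card m := by
  rw [charpoly_fromBlocks_zero₂₁, charpoly_zero, charpoly_fin_two_eq_mul]
  · rw [trace_smul, htr, smul_eq_mul]
    ring
  · rw [det_smul, hdet, Fintype.card_fin]
    ring

theorem mobiusFactor_cone {m : Type*} [Fintype m] {n : K} (hn : n ≠ 0) (hn₁ : n - 1 ≠ 0)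
    {t : K} (ht : t ≠ 0) {S : Matrix (Fin 2) (Fin 2) K} (hS : S.IsSymm) {a b : K}
    (htr : S.trace = a + b) (hdet : S.det = a * b) :
    let F := fromBlocks (t⁻¹ • S) 0 0 (0 : Matrix m m K)
    n / (n - 1) * ((F * Fᵀ).trace - n * (F.trace / n) ^ 2) =
      ((a + b) ^ 2 - 2 * n / (n - 1) * (a * b)) / t ^ 2 := by
  intro F
  have hF : F.trace = t⁻¹ * (a + b) := by
    rw [trace_fromBlocks, trace_smul, htr, trace_zero, add_zero, smul_eq_mul]
  have hFF : (F * Fᵀ).trace = t⁻¹ ^ 2 * ((a + b) ^ 2 - 2 * (a * b)) := by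
    rw [fromBlocks_transpose, fromBlocks_multiply]
    simp only [transpose_zero, Matrix.mul_zero, Matrix.zero_mul, add_zero, trace_fromBlocks,
      trace_zero]
    rw [transpose_smul, hS.eq, smul_mul_smul_comm, trace_smul, trace_mul_self_fin_two, htr, hdet,
      smul_eq_mul]
    ring
  rw [hF, hFF]
  field_simp
  ring

theorem div_sq_smul_fromBlocks {m : Type*} [DecidableEq m] {t : K} (ht : t ≠ 0) (c : K)
    (I : Matrix (Fin 2) (Fin 2) K) :
    (c / t ^ 2) • fromBlocks (t ^ 2 • I) 0 0 (1 : Matrix m m K) =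
      c • fromBlocks I 0 0 ((t ^ 2)⁻¹ • 1) := by
  simp only [fromBlocks_smul, smul_zero, smul_smul]
  congr 2
  · field_simp
  · ring

end Cone

/-- Proposition (cones, Example 3.2): let `u : L² → S³ ⊂ ℝ⁴` be an immersed
surface with principal curvatures `k₁, k₂`, mean curvature `H_u`, Gauss
curvature `K_u = 1 + k₁k₂` (Gauss equation in `S³`) and first fundamental form
`I_u`, recorded by its symmetric shape operator `Su`.  The cone
`f(p,t,y) = (t·u(p), y) : L² × ℝ⁺ × ℝ^{n−3} → ℝ^{n+1}` has first fundamental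
form `t²I_u + I_{ℝ^{n−2}}` and shape operator `(1/t)Su ⊕ 0` in an adapted
orthonormal frame.  Then for `t > 0` the principal curvatures of `f` are
`k₁/t, k₂/t, 0, …, 0`, and its Möbius metric `g = ρ² I_f` equals
`[4H_u² − (2n/(n−1))(K_u − 1)]·(I_u + I_{H^{n−2}})`, where `I_{H^{n−2}}` is the
hyperbolic metric `(1/t²)·Id` on `ℝ⁺ × ℝ^{n−3}` in the flat coordinates. -/
theorem stmt12 (n : ℕ) (hn : 4 ≤ n) (L : Type*)
    (k₁ k₂ Hu Ku : L → ℝ)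
    (Iu Su : L → Matrix (Fin 2) (Fin 2) ℝ)
    (hSsym : ∀ p, (Su p).IsSymm)
    (htr : ∀ p, (Su p).trace = k₁ p + k₂ p)
    (hdet : ∀ p, (Su p).det = k₁ p * k₂ p)
    (hH : ∀ p, Hu p = (k₁ p + k₂ p) / 2)
    (hK : ∀ p, Ku p = 1 + k₁ p * k₂ p)
    (If Sf : L → ℝ → Matrix (Fin 2 ⊕ Fin (n - 2)) (Fin 2 ⊕ Fin (n - 2)) ℝ)
    (hIf : ∀ p t, If p t = Matrix.fromBlocks (t ^ 2 • Iu p) 0 0 1)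
    (hSf : ∀ p t, Sf p t = Matrix.fromBlocks (t⁻¹ • Su p) 0 0 0)
    (ρsq : L → ℝ → ℝ)
    (hρsq : ∀ p t, ρsq p t = ((n : ℝ) / ((n : ℝ) - 1)) *
      ((Sf p t * (Sf p t)ᵀ).trace - n * ((Sf p t).trace / n) ^ 2))
    (g : L → ℝ → Matrix (Fin 2 ⊕ Fin (n - 2)) (Fin 2 ⊕ Fin (n - 2)) ℝ)
    (hg : ∀ p t, g p t = ρsq p t • If p t) :
    (∀ p, ∀ t : ℝ, 0 < t → (Sf p t).charpoly =
      (X - C (k₁ p / t)) * (X - C (k₂ p / t)) * X ^ (n - 2)) ∧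
    (∀ p, ∀ t : ℝ, 0 < t → g p t =
      (4 * (Hu p) ^ 2 - (2 * (n : ℝ) / ((n : ℝ) - 1)) * (Ku p - 1)) •
        Matrix.fromBlocks (Iu p) 0 0 ((t ^ 2)⁻¹ • 1)) := by
  refine ⟨fun p t _ => ?_, fun p t ht => ?_⟩
  · rw [hSf, charpoly_cone_shapeOperator _ (htr p) (hdet p), Fintype.card_fin]
  · have hn' : (4 : ℝ) ≤ n := by exact_mod_cast hn
    have hH4 : 4 * Hu p ^ 2 = (k₁ p + k₂ p) ^ 2 := by rw [hH]; ring
    rw [hg, hIf, hρsq, hSf, mobiusFactor_cone (by linarith) (by linarith) ht.ne' (hSsym p)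
      (htr p) (hdet p), div_sq_smul_fromBlocks ht.ne', hH4, hK, add_sub_cancel_left]
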